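/- arXiv:2210.13523 — 5 statements merged into one kernel-verified Lean document; each statement's English description precedes it below -/
import Mathlib

section
/- Let (g, ω) be a symplectic Lie algebra and define the product x·y by ω(x·y, z) = -ω(y, [x,z]). Then this product is left-symmetric, i.e., (x·y)·z - x·(y·z) = (y·x)·z - y·(x·z) for all x, y, z ∈ g. -/
theorem left_symmetric_of_symplectic_product (g : Type*) [LieRing g] [LieAlgebra ℝ g]
    [FiniteDimensional ℝ g]
    (ω : g →ₗ[ℝ] g →ₗ[ℝ] ℝ)
    (halt : ∀ x, ω x x = 0)
    (hnd : ∀ x, (∀ y, ω x y = 0) → x = 0)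
    (hclosed : ∀ x y z, ω ⁅x, y⁆ z + ω ⁅y, z⁆ x + ω ⁅z, x⁆ y = 0)
    (mul : g →ₗ[ℝ] g →ₗ[ℝ] g)
    (hmul : ∀ x y z, ω (mul x y) z = -ω y ⁅x, z⁆) :
    ∀ x y z, mul (mul x y) z - mul x (mul y z) = mul (mul y x) z - mul y (mul x z) := by
  have skew : ∀ x y, ω x y = -ω y x := by
    intro x y
    have h := halt (x + y)
    simp only [map_add, LinearMap.add_apply] at h
    have hx := halt x
    have hy := halt y
    linarith
  -- x·y - y·x = [x,y]
  have hcomm : ∀ x y, mul x y - mul y x = ⁅x, y⁆ := by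
    intro x y
    have key : mul x y - mul y x - ⁅x, y⁆ = 0 := by
      apply hnd
      intro z
      simp only [map_sub, LinearMap.sub_apply]
      rw [hmul x y z, hmul y x z]
      have hc := hclosed x y z
      have s1 := skew ⁅y, z⁆ x
      have s2 := skew ⁅z, x⁆ y
      have e1 : ω y ⁅z, x⁆ = -ω y ⁅x, z⁆ := by
        rw [show ⁅z, x⁆ = -⁅x, z⁆ from (lie_skew z x).symm, map_neg]
      linarith
    exact sub_eq_zero.mp key
  intro x y z
  rw [← sub_eq_zero]
  apply hnd
  intro w
  simp only [map_sub, LinearMap.sub_apply]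
  rw [hmul (mul x y) z w, hmul x (mul y z) w, hmul (mul y x) z w, hmul y (mul x z) w,
    hmul y z ⁅x, w⁆, hmul x z ⁅y, w⁆]
  have hxy : mul x y = mul y x + ⁅x, y⁆ := by
    have := hcomm x y; rw [← this]; abel
  have hlie : ⁅mul x y, w⁆ = ⁅mul y x, w⁆ + ⁅⁅x, y⁆, w⁆ := by
    rw [hxy, add_lie]
  have hjac : ⁅x, ⁅y, w⁆⁆ = ⁅⁅x, y⁆, w⁆ + ⁅y, ⁅x, w⁆⁆ := leibniz_lie x y w
  rw [hlie, hjac]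
  simp only [map_add]
  ring
end

section
/- Let (A, ·) be a finite-dimensional nonzero left-symmetric algebra whose associated Lie algebra satisfies [A,A] = A. Then A has no right identity, i.e., there is no e ∈ A with x·e = x for all x. -/
theorem no_right_identity (A : Type*) [AddCommGroup A] [Module ℝ A]
    [FiniteDimensional ℝ A] (hdim : 0 < Module.finrank ℝ A)
    (mul : A →ₗ[ℝ] A →ₗ[ℝ] A)
    (hls : ∀ x y z, mul (mul x y) z - mul x (mul y z) = mul (mul y x) z - mul y (mul x z))
    (hperfect : Submodule.span ℝ {z : A | ∃ x y, z = mul x y - mul y x} = ⊤) :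
    ¬ ∃ e : A, ∀ x, mul x e = x := by
  rintro ⟨e, he⟩
  -- f z = trace of right multiplication by z
  set f : A →ₗ[ℝ] ℝ := (LinearMap.trace ℝ A) ∘ₗ mul.flip with hf
  -- R(x·y) = R(y)∘R(x) - R(y)∘L(x) + L(x)∘R(y)
  have key : ∀ x y : A, mul.flip (mul x y)
      = (mul.flip y) ∘ₗ (mul.flip x) - (mul.flip y) ∘ₗ (mul x) + (mul x) ∘ₗ (mul.flip y) := by
    intro x y
    ext a
    have h := hls a x y
    simp only [LinearMap.add_apply, LinearMap.sub_apply, LinearMap.comp_apply,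
      LinearMap.flip_apply] at *
    linear_combination (norm := abel1) -h
  have traceRmul : ∀ x y : A, f (mul x y) = LinearMap.trace ℝ A ((mul.flip y) ∘ₗ (mul.flip x)) := by
    intro x y
    simp only [hf, LinearMap.comp_apply, key x y, map_add, map_sub]
    rw [LinearMap.trace_comp_comm' (mul.flip y) (mul x)]
    ring
  have fcomm : ∀ x y : A, f (mul x y - mul y x) = 0 := by
    intro x y
    rw [map_sub, traceRmul, traceRmul, LinearMap.trace_comp_comm', sub_self]
  have fzero : ∀ z : A, f z = 0 := by
    intro z
    have hz : z ∈ Submodule.span ℝ {z : A | ∃ x y, z = mul x y - mul y x} := by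
      rw [hperfect]; trivial
    induction hz using Submodule.span_induction with
    | mem w hw => obtain ⟨x, y, rfl⟩ := hw; exact fcomm x y
    | zero => simp
    | add a b _ _ ha hb => rw [map_add, ha, hb, add_zero]
    | smul c a _ ha => rw [map_smul, ha, smul_zero]
  have hid : mul.flip e = LinearMap.id := by
    ext a; simp [he a]
  have : f e = (Module.finrank ℝ A : ℝ) := by
    simp [hf, hid, LinearMap.trace_id]
  rw [fzero e] at this
  have := this.symm
  norm_num at this
  omega
end

section
/- Let (h, ·) be a left-symmetric algebra with associated Lie algebra bracket [x,y] = x·y - y·x, let ρ : h → gl(h*) be the dual of the left regular representation, ρ(x)ξ = -ξ∘L(x), and let α : h × h → h* be an alternating bilinear map. Define on g = h ⊕ h* the bracket [x,y]_g = [x,y]_h + α(x,y), [x,ξ]_g = ρ(x)ξ, [ξ,η]_g = 0 for x,y ∈ h, ξ,η ∈ h*. Let ω be the non-degenerate alternating form given by the dual pairing: ω(x+ξ, y+η) = η(x) - ξ(y). If g is a Lie algebra (α is a 2-cocycle), then ω satisfies the symplectic cocycle condition dω = 0 if and only if α(x,y)(z) + α(y,z)(x) + α(z,x)(y) = 0 for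 all x,y,z ∈ h. -/
theorem lagrangian_extension_symplectic_iff (h : Type*) [LieRing h] [LieAlgebra ℝ h]
    [FiniteDimensional ℝ h]
    (mul : h →ₗ[ℝ] h →ₗ[ℝ] h)
    (hls : ∀ x y z, mul (mul x y) z - mul x (mul y z) = mul (mul y x) z - mul y (mul x z))
    (hcomm : ∀ x y, mul x y - mul y x = ⁅x, y⁆)
    (α : h →ₗ[ℝ] h →ₗ[ℝ] (h →ₗ[ℝ] ℝ))
    (halt : ∀ x, α x x = 0)
    (ρ : h → (h →ₗ[ℝ] ℝ) → (h →ₗ[ℝ] ℝ))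
    (hρ : ∀ x ξ y, ρ x ξ y = -ξ (mul x y))
    (hcocycle : ∀ x y z,
      ρ x (α y z) - ρ y (α x z) + ρ z (α x y)
        - α ⁅x, y⁆ z + α ⁅x, z⁆ y - α ⁅y, z⁆ x = 0)
    (br : (h × (h →ₗ[ℝ] ℝ)) → (h × (h →ₗ[ℝ] ℝ)) → (h × (h →ₗ[ℝ] ℝ)))
    (hbr : ∀ a b, br a b = (⁅a.1, b.1⁆, α a.1 b.1 + ρ a.1 b.2 - ρ b.1 a.2))
    (ω : (h × (h →ₗ[ℝ] ℝ)) → (h × (h →ₗ[ℝ] ℝ)) → ℝ)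
    (hω : ∀ a b, ω a b = b.2 a.1 - a.2 b.1) :
    (∀ a b c, ω (br a b) c + ω (br b c) a + ω (br c a) b = 0) ↔
      (∀ x y z : h, α x y z + α y z x + α z x y = 0) := by
  constructor
  · intro H x y z
    have := H (x, 0) (y, 0) (z, 0)
    simp only [hbr, hω] at this
    simp only [LinearMap.add_apply, LinearMap.sub_apply, hρ, LinearMap.zero_apply,
      map_zero] at this
    linarith
  · intro H a b c
    have := H a.1 b.1 c.1
    simp only [hbr, hω, ← hcomm, map_sub]
    simp only [LinearMap.add_apply, LinearMap.sub_apply, hρ]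
    linarith
end

section
/- Let h be a Lie algebra, ρ : h → gl(V) a Lie algebra representation with dim V = dim h, and φ : h → V a bijective linear map satisfying the 1-cocycle condition φ([x,y]) = ρ(x)φ(y) - ρ(y)φ(x) for all x,y ∈ h. Then the product x*y = φ⁻¹(ρ(x)φ(y)) is left-symmetric and satisfies x*y - y*x = [x,y]. -/
attribute [local instance 100] LieRing.ofAssociativeRing

/-!
Transporting the action `ρ` to `h` along `φ` gives the product `x * y = φ⁻¹ (ρ x (φ y))`. The
cocycle identity says exactly that its commutator is the bracket, and then the associator of the
product is `φ⁻¹ ((ρ (x * y) - ρ x ρ y) (φ z))`, whose antisymmetrisation in `x, y` is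
`φ⁻¹ ((ρ ⁅x, y⁆ - ⁅ρ x, ρ y⁆) (φ z)) = 0` because `ρ` is a Lie algebra morphism.
-/

namespace LieAlgebra

variable {R L M : Type*} [CommRing R] [LieRing L] [LieAlgebra R L] [AddCommGroup M] [Module R M]
  (ρ : L →ₗ⁅R⁆ Module.End R M) (φ : L ≃ₗ[R] M)

def cocycleMul (x y : L) : L := φ.symm (ρ x (φ y))

variable {ρ φ}

theorem apply_cocycleMul (x y : L) : φ (cocycleMul ρ φ x y) = ρ x (φ y) :=
  φ.apply_symm_apply _

theorem cocycleMul_sub_swap (hφ : ∀ x y, φ ⁅x, y⁆ = ρ x (φ y) - ρ y (φ x)) (x y : L) :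
    cocycleMul ρ φ x y - cocycleMul ρ φ y x = ⁅x, y⁆ := by
  rw [cocycleMul, cocycleMul, ← map_sub, ← hφ, φ.symm_apply_apply]

theorem cocycleMul_leftSymmetric (hφ : ∀ x y, φ ⁅x, y⁆ = ρ x (φ y) - ρ y (φ x)) (x y z : L) :
    cocycleMul ρ φ (cocycleMul ρ φ x y) z - cocycleMul ρ φ x (cocycleMul ρ φ y z) =
      cocycleMul ρ φ (cocycleMul ρ φ y x) z - cocycleMul ρ φ y (cocycleMul ρ φ x z) := by
  have hρ : ρ (cocycleMul ρ φ x y) - ρ (cocycleMul ρ φ y x) = ρ x * ρ y - ρ y * ρ x := by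
    rw [← map_sub, cocycleMul_sub_swap hφ, LieHom.map_lie, Ring.lie_def]
  apply φ.injective
  simp only [map_sub, apply_cocycleMul]
  rw [sub_eq_sub_iff_sub_eq_sub]
  simpa only [LinearMap.sub_apply, Module.End.mul_apply] using congrArg (· (φ z)) hρ

end LieAlgebra

theorem lsa_from_bijective_cocycle_general (h V : Type*) [LieRing h] [LieAlgebra ℝ h]
    [AddCommGroup V] [Module ℝ V]
    (ρ : h →ₗ⁅ℝ⁆ Module.End ℝ V)
    (φ : h ≃ₗ[ℝ] V)
    (hcocycle : ∀ x y, φ ⁅x, y⁆ = ρ x (φ y) - ρ y (φ x))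
    (star : h → h → h)
    (hstar : ∀ x y, star x y = φ.symm (ρ x (φ y))) :
    (∀ x y z, star (star x y) z - star x (star y z) = star (star y x) z - star y (star x z)) ∧
    (∀ x y, star x y - star y x = ⁅x, y⁆) := by
  obtain rfl : star = LieAlgebra.cocycleMul ρ φ := funext₂ hstar
  exact ⟨LieAlgebra.cocycleMul_leftSymmetric hcocycle, LieAlgebra.cocycleMul_sub_swap hcocycle⟩

theorem lsa_from_bijective_cocycle (h V : Type*) [LieRing h] [LieAlgebra ℝ h]
    [FiniteDimensional ℝ h] [AddCommGroup V] [Module ℝ V] [FiniteDimensional ℝ V]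
    (hdim : Module.finrank ℝ V = Module.finrank ℝ h)
    (ρ : h →ₗ⁅ℝ⁆ Module.End ℝ V)
    (φ : h ≃ₗ[ℝ] V)
    (hcocycle : ∀ x y, φ ⁅x, y⁆ = ρ x (φ y) - ρ y (φ x))
    (star : h → h → h)
    (hstar : ∀ x y, star x y = φ.symm (ρ x (φ y))) :
    (∀ x y z, star (star x y) z - star x (star y z) = star (star y x) z - star y (star x z)) ∧
    (∀ x y, star x y - star y x = ⁅x, y⁆) :=
  lsa_from_bijective_cocycle_general h V ρ φ hcocycle star hstar
end

section
/- Let g be the 8-dimensional Lie algebra L_{8,3} with basis e₁,…,e₈ and brackets [e₁,e₂]=e₃, [e₁,e₃]=-e₂, [e₂,e₃]=e₁, [e₁,e₅]=e₆, [e₁,e₆]=-e₅, [e₂,e₅]=e₇, [e₂,e₇]=-e₅, [e₃,e₆]=e₇, [e₃,e₇]=-e₆, [e₄,e₈]=e₄, [e₅,e₈]=e₅, [e₆,e₈]=e₆, [e₇,e₈]=e₇, equipped with the symplectic form ω = e¹∧e⁷ + e²∧e⁵ + e³∧e⁶ - 2e⁴∧e⁸. Then J = span(e₄,e₅,e₆,e₇)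 is a Lagrangian ideal: J is an ideal of g, ω vanishes identically on J × J, and dim J = 4 = ½ dim g. -/
/-! The bracket and `ω` are bilinear, so the ideal property only has to be checked on pairs
(basis vector, generator of `J`) and isotropy on pairs of generators of `J`: both are finite
lookups in the structure constants and in the matrix of `ω`. -/

open Module Submodule

section Bilinear

variable {R M N P : Type*} [CommSemiring R] [AddCommMonoid M] [AddCommMonoid N] [AddCommMonoid P]
  [Module R M] [Module R N] [Module R P]

theorem LinearMap.apply_mem_of_mem_span_of_mem_span (f : M →ₗ[R] N →ₗ[R] P) {s : Set M}
    {t : Set N} {K : Submodule R P} (h : ∀ x ∈ s, ∀ y ∈ t, f x y ∈ K) {x : M} {y : N}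
    (hx : x ∈ span R s) (hy : y ∈ span R t) : f x y ∈ K := by
  refine map₂_le.mp ?_ x hx y hy
  rw [map₂_span_span, span_le]
  rintro _ ⟨x, hx, y, hy, rfl⟩
  exact h x hx y hy

theorem LinearMap.apply_eq_zero_of_mem_span_of_mem_span (f : M →ₗ[R] N →ₗ[R] P) {s : Set M}
    {t : Set N} (h : ∀ x ∈ s, ∀ y ∈ t, f x y = 0) {x : M} {y : N} (hx : x ∈ span R s)
    (hy : y ∈ span R t) : f x y = 0 :=
  (mem_bot R).mp <|
    f.apply_mem_of_mem_span_of_mem_span (fun x hx y hy => (mem_bot R).mpr <| h x hx y hy) hx hy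

end Bilinear

theorem lie_mem_span_of_forall_basis {ι R L : Type*} [CommRing R] [LieRing L] [LieAlgebra R L]
    (b : Basis ι R L) {s : Set L} (h : ∀ i, ∀ z ∈ s, ⁅b i, z⁆ ∈ span R s) (x : L) {y : L}
    (hy : y ∈ span R s) : ⁅x, y⁆ ∈ span R s := by
  have hx : x ∈ span R (Set.range b) := b.span_eq ▸ mem_top
  simpa using (LieModule.toEnd R L L : L →ₗ[R] L →ₗ[R] L).apply_mem_of_mem_span_of_mem_span
    (by rintro _ ⟨i, rfl⟩ z hz; simpa using h i z hz) hx hy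

theorem Module.Basis.finrank_span_image {ι R M : Type*} [Ring R] [Nontrivial R]
    [StrongRankCondition R] [AddCommGroup M] [Module R M] (b : Basis ι R M) (s : Finset ι) :
    finrank R (span R (b '' s)) = s.card := by
  have := finrank_span_eq_card (b.linearIndependent.comp ((↑) : s → ι) Subtype.val_injective)
  rwa [Set.range_comp, Subtype.range_coe_subtype, Fintype.card_coe] at this

theorem L83_lagrangian_ideal_general (g : Type*) [LieRing g] [LieAlgebra ℝ g]
    (b : Module.Basis (Fin 8) ℝ g)
    -- non-vanishing brackets of L_{8,3} (e₁,…,e₈ ↦ b 0,…,b 7)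
    (h15 : ⁅b 0, b 4⁆ = b 5) (h16 : ⁅b 0, b 5⁆ = -b 4)
    (h25 : ⁅b 1, b 4⁆ = b 6) (h27 : ⁅b 1, b 6⁆ = -b 4)
    (h36 : ⁅b 2, b 5⁆ = b 6) (h37 : ⁅b 2, b 6⁆ = -b 5)
    (h48 : ⁅b 3, b 7⁆ = b 3) (h58 : ⁅b 4, b 7⁆ = b 4)
    (h68 : ⁅b 5, b 7⁆ = b 5) (h78 : ⁅b 6, b 7⁆ = b 6)
    -- remaining brackets vanish
    (h14 : ⁅b 0, b 3⁆ = 0) (h17 : ⁅b 0, b 6⁆ = 0)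
    (h24 : ⁅b 1, b 3⁆ = 0) (h26 : ⁅b 1, b 5⁆ = 0)
    (h34 : ⁅b 2, b 3⁆ = 0) (h35 : ⁅b 2, b 4⁆ = 0)
    (h45 : ⁅b 3, b 4⁆ = 0) (h46 : ⁅b 3, b 5⁆ = 0) (h47 : ⁅b 3, b 6⁆ = 0)
    (h56 : ⁅b 4, b 5⁆ = 0) (h57 : ⁅b 4, b 6⁆ = 0) (h67 : ⁅b 5, b 6⁆ = 0)
    -- ω = e¹∧e⁷ + e²∧e⁵ + e³∧e⁶ - 2 e⁴∧e⁸
    (ω : g →ₗ[ℝ] g →ₗ[ℝ] ℝ)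
    (hω : ∀ i j, ω (b i) (b j) =
      (!![0,0,0,0,0,0,1,0; 0,0,0,0,1,0,0,0; 0,0,0,0,0,1,0,0; 0,0,0,0,0,0,0,-2;
          0,-1,0,0,0,0,0,0; 0,0,-1,0,0,0,0,0; -1,0,0,0,0,0,0,0; 0,0,0,2,0,0,0,0]
        : Matrix (Fin 8) (Fin 8) ℝ) i j) :
    (∀ x : g, ∀ y ∈ Submodule.span ℝ ({b 3, b 4, b 5, b 6} : Set g),
        ⁅x, y⁆ ∈ Submodule.span ℝ ({b 3, b 4, b 5, b 6} : Set g)) ∧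
    (∀ x ∈ Submodule.span ℝ ({b 3, b 4, b 5, b 6} : Set g),
      ∀ y ∈ Submodule.span ℝ ({b 3, b 4, b 5, b 6} : Set g), ω x y = 0) ∧
    Module.finrank ℝ ↥(Submodule.span ℝ ({b 3, b 4, b 5, b 6} : Set g)) = 4 ∧
    Module.finrank ℝ g = 8 := by
  refine ⟨lie_mem_span_of_forall_basis b ?_, fun x hx y hy => ?_, ?_, ?_⟩
  · simp only [Set.mem_insert_iff, Set.mem_singleton_iff, forall_eq_or_imp, forall_eq]
    intro i
    fin_cases i <;> refine ⟨?_, ?_, ?_, ?_⟩ <;>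
      first
        | (simp [mem_span_of_mem, h14, h15, h16, h17, h24, h25, h26, h27, h34, h35, h36, h37,
            h45, h46, h47, h56, h57, h67]; done)
        | (rw [← lie_skew]; simp [mem_span_of_mem, h45, h46, h47, h56, h57, h67, h48, h58, h68, h78])
  · refine ω.apply_eq_zero_of_mem_span_of_mem_span ?_ hx hy
    simp only [Set.mem_insert_iff, Set.mem_singleton_iff]
    rintro _ (rfl | rfl | rfl | rfl) _ (rfl | rfl | rfl | rfl) <;> simp [hω]
  · have hJ : ({b 3, b 4, b 5, b 6} : Set g) = b '' ↑({3, 4, 5, 6} : Finset (Fin 8)) := by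
      simp [Set.image_insert_eq]
    rw [hJ, b.finrank_span_image]
    rfl
  · simp [finrank_eq_card_basis b]

theorem L83_lagrangian_ideal (g : Type*) [LieRing g] [LieAlgebra ℝ g]
    [FiniteDimensional ℝ g]
    (b : Module.Basis (Fin 8) ℝ g)
    -- non-vanishing brackets of L_{8,3} (e₁,…,e₈ ↦ b 0,…,b 7)
    (h12 : ⁅b 0, b 1⁆ = b 2) (h13 : ⁅b 0, b 2⁆ = -b 1) (h23 : ⁅b 1, b 2⁆ = b 0)
    (h15 : ⁅b 0, b 4⁆ = b 5) (h16 : ⁅b 0, b 5⁆ = -b 4)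
    (h25 : ⁅b 1, b 4⁆ = b 6) (h27 : ⁅b 1, b 6⁆ = -b 4)
    (h36 : ⁅b 2, b 5⁆ = b 6) (h37 : ⁅b 2, b 6⁆ = -b 5)
    (h48 : ⁅b 3, b 7⁆ = b 3) (h58 : ⁅b 4, b 7⁆ = b 4)
    (h68 : ⁅b 5, b 7⁆ = b 5) (h78 : ⁅b 6, b 7⁆ = b 6)
    -- remaining brackets vanish
    (h14 : ⁅b 0, b 3⁆ = 0) (h17 : ⁅b 0, b 6⁆ = 0) (h18 : ⁅b 0, b 7⁆ = 0)
    (h24 : ⁅b 1, b 3⁆ = 0) (h26 : ⁅b 1, b 5⁆ = 0) (h28 : ⁅b 1, b 7⁆ = 0)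
    (h34 : ⁅b 2, b 3⁆ = 0) (h35 : ⁅b 2, b 4⁆ = 0) (h38 : ⁅b 2, b 7⁆ = 0)
    (h45 : ⁅b 3, b 4⁆ = 0) (h46 : ⁅b 3, b 5⁆ = 0) (h47 : ⁅b 3, b 6⁆ = 0)
    (h56 : ⁅b 4, b 5⁆ = 0) (h57 : ⁅b 4, b 6⁆ = 0) (h67 : ⁅b 5, b 6⁆ = 0)
    -- ω = e¹∧e⁷ + e²∧e⁵ + e³∧e⁶ - 2 e⁴∧e⁸
    (ω : g →ₗ[ℝ] g →ₗ[ℝ] ℝ)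
    (hω : ∀ i j, ω (b i) (b j) =
      (!![0,0,0,0,0,0,1,0; 0,0,0,0,1,0,0,0; 0,0,0,0,0,1,0,0; 0,0,0,0,0,0,0,-2;
          0,-1,0,0,0,0,0,0; 0,0,-1,0,0,0,0,0; -1,0,0,0,0,0,0,0; 0,0,0,2,0,0,0,0]
        : Matrix (Fin 8) (Fin 8) ℝ) i j) :
    (∀ x : g, ∀ y ∈ Submodule.span ℝ ({b 3, b 4, b 5, b 6} : Set g),
        ⁅x, y⁆ ∈ Submodule.span ℝ ({b 3, b 4, b 5, b 6} : Set g)) ∧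
    (∀ x ∈ Submodule.span ℝ ({b 3, b 4, b 5, b 6} : Set g),
      ∀ y ∈ Submodule.span ℝ ({b 3, b 4, b 5, b 6} : Set g), ω x y = 0) ∧
    Module.finrank ℝ ↥(Submodule.span ℝ ({b 3, b 4, b 5, b 6} : Set g)) = 4 ∧
    Module.finrank ℝ g = 8 :=
  L83_lagrangian_ideal_general g b h15 h16 h25 h27 h36 h37 h48 h58 h68 h78 h14 h17 h24 h26 h34 h35
    h45 h46 h47 h56 h57 h67 ω hω
end
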